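/- arXiv:1705.09797 — 2 statements merged into one kernel-verified Lean document; each statement's English description precedes it below -/
import Mathlib

section
/- For every finite connected simple graph G, the slimness of G is at most ⌊Δ̂(G)/2⌋, where Δ̂(G) is the maximum cluster-diameter over all layering partitions of G. -/
open SimpleGraph

/-- Two vertices `u, v` lie in the same cluster of the layering partition of `G`
with respect to start vertex `s`: they are in the same layer and are connected by a
walk all of whose vertices are at distance at least `d_G(s,u)` from `s`. -/
def SameCluster {V : Type} (G : SimpleGraph V) (s u v : V) : Prop :=
  G.dist s u = G.dist s v ∧
  ∃ p : G.Walk u v, ∀ w ∈ p.support, G.dist s u ≤ G.dist s w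

open scoped Classical in
/-- The cluster-diameter `Δ_s(G)` of the layering partition of `G` w.r.t. `s`:
the largest distance in `G` between two vertices lying in a common cluster. -/
noncomputable def clusterDiam {V : Type} [Fintype V] (G : SimpleGraph V) (s : V) : ℕ :=
  Finset.univ.sup fun p : V × V =>
    if SameCluster G s p.1 p.2 then G.dist p.1 p.2 else 0

/-- `Δ̂(G)`: the maximum cluster-diameter over all layering partitions of `G`. -/
noncomputable def maxClusterDiam {V : Type} [Fintype V] (G : SimpleGraph V) : ℕ :=
  Finset.univ.sup fun s : V => clusterDiam G s

/-- A walk is a geodesic (shortest path) if its length equals the distance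
between its endpoints. -/
def IsGeodesic {V : Type} (G : SimpleGraph V) {x y : V} (p : G.Walk x y) : Prop :=
  p.length = G.dist x y

/-- `G` is `δ`-slim: in every geodesic triangle, every vertex on one side is within
distance `δ` (in `G`) from the union of the other two sides. -/
def IsSlim {V : Type} (G : SimpleGraph V) (δ : ℕ) : Prop :=
  ∀ (x y z : V) (pxy : G.Walk x y) (pxz : G.Walk x z) (pyz : G.Walk y z),
    IsGeodesic G pxy → IsGeodesic G pxz → IsGeodesic G pyz →
    ∀ u ∈ pxy.support, ∃ v, (v ∈ pxz.support ∨ v ∈ pyz.support) ∧ G.dist u v ≤ δ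

/-- The slimness `sl(G)`: the smallest `δ` such that `G` is `δ`-slim. -/
noncomputable def slimness {V : Type} (G : SimpleGraph V) : ℕ :=
  sInf {δ : ℕ | IsSlim G δ}

/-!
Suppose a vertex `u` on the side `P(x,y)` of a geodesic triangle is at distance more than `n`
from the two other sides, which together form a walk from `x` to `y`. Walking from `u` towards
`x` and towards `y` along `P(x,y)` we reach vertices `a` and `b` at distance exactly `n + 1`
from `u`; the detour `a → x → z → y → b` stays outside the ball of radius `n` around `u`, so
`a` and `b` lie in one cluster of the layering partition from `u` and `d(a,b) ≤ Δ̂(G)`.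
Since `P(x,y)` is a geodesic through `u`, `d(a,b) = 2n + 2`, hence `n < ⌊Δ̂(G)/2⌋` fails.
-/

namespace SimpleGraph

variable {V : Type} {G : SimpleGraph V}

lemma Walk.exists_walk_to_sphere (s : V) {v w : V} (W : G.Walk v w) (n : ℕ)
    (hw : G.dist s w < n) (hv : n ≤ G.dist s v) :
    ∃ a ∈ W.support, G.dist s a = n ∧
      ∃ W' : G.Walk v a, ∀ t ∈ W'.support, n ≤ G.dist s t := by
  induction W with
  | nil => omega
  | @cons v v₁ w hadj W₀ ih =>
    by_cases hv₁ : n ≤ G.dist s v₁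
    · obtain ⟨a, ha, hda, W', hW'⟩ := ih hw hv₁
      refine ⟨a, by simp [ha], hda, Walk.cons hadj W', ?_⟩
      simp only [Walk.support_cons, List.mem_cons, forall_eq_or_imp]
      exact ⟨hv, hW'⟩
    · have hdv : G.dist s v = n := by
        rcases hadj.symm.diff_dist_adj (u := s) with h | h | h <;> omega
      exact ⟨v, by simp, hdv, Walk.nil, by simp [hdv]⟩

lemma dist_add_dist_of_mem_support {x y w : V} {p : G.Walk x y} (hp : IsGeodesic G p)
    (hw : w ∈ p.support) : G.dist x w + G.dist w y = G.dist x y := by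
  classical
  have hlen : (p.takeUntil w hw).length + (p.dropUntil w hw).length = p.length := by
    rw [← Walk.length_append, p.take_spec hw]
  have htri := (p.takeUntil w hw).reachable.dist_triangle_left y
  have hxw := dist_le (p.takeUntil w hw)
  have hwy := dist_le (p.dropUntil w hw)
  unfold IsGeodesic at hp
  omega

lemma dist_add_dist_le_of_mem_takeUntil_of_mem_dropUntil [DecidableEq V] {x y u a b : V}
    {p : G.Walk x y} (hp : IsGeodesic G p) (hu : u ∈ p.support)
    (ha : a ∈ (p.takeUntil u hu).support) (hb : b ∈ (p.dropUntil u hu).support) :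
    G.dist a u + G.dist u b ≤ G.dist a b := by
  have hxu : IsGeodesic G (p.takeUntil u hu) :=
    length_eq_dist_of_subwalk hp (Walk.isSubwalk_takeUntil p hu)
  have huy : IsGeodesic G (p.dropUntil u hu) :=
    length_eq_dist_of_subwalk hp (Walk.isSubwalk_dropUntil p hu)
  have hxuy := dist_add_dist_of_mem_support hp hu
  have hxau := dist_add_dist_of_mem_support hxu ha
  have huby := dist_add_dist_of_mem_support huy hb
  have hxa : G.Reachable x a := ((p.takeUntil u hu).takeUntil a ha).reachable
  have hab : G.Reachable a b := (hxa.symm.trans p.reachable).trans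
    ((p.dropUntil u hu).dropUntil b hb).reachable.symm
  have hxay := hxa.dist_triangle_left y
  have haby := hab.dist_triangle_left y
  omega

open scoped Classical in
lemma dist_le_clusterDiam [Fintype V] {s a b : V} (h : SameCluster G s a b) :
    G.dist a b ≤ clusterDiam G s :=
  (if_pos h).symm.trans_le <| Finset.le_sup (f := fun p : V × V =>
    if SameCluster G s p.1 p.2 then G.dist p.1 p.2 else 0) (Finset.mem_univ (a, b))

lemma clusterDiam_le_maxClusterDiam [Fintype V] (s : V) : clusterDiam G s ≤ maxClusterDiam G :=
  Finset.le_sup (f := fun s => clusterDiam G s) (Finset.mem_univ s)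

/-- A geodesic through `u` and a second walk with the same ends avoiding the ball of radius `n`
around `u` force a cluster of diameter at least `2n + 2` in the layering partition from `u`. -/
lemma two_mul_add_two_le_maxClusterDiam [Fintype V] {x y u : V} {p q : G.Walk x y}
    (hp : IsGeodesic G p) (hu : u ∈ p.support) (n : ℕ)
    (hq : ∀ v ∈ q.support, n < G.dist u v) :
    2 * n + 2 ≤ maxClusterDiam G := by
  classical
  have hx := hq x q.start_mem_support
  have hy := hq y q.end_mem_support
  obtain ⟨a, ha, hua, Wa, hWa⟩ :=
    (p.takeUntil u hu).exists_walk_to_sphere u (n + 1) (by simp) (by omega)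
  obtain ⟨b, hb, hub, Wb, hWb⟩ :=
    (p.dropUntil u hu).reverse.exists_walk_to_sphere u (n + 1) (by simp) (by omega)
  rw [Walk.support_reverse, List.mem_reverse] at hb
  have hcluster : SameCluster G u a b := by
    refine ⟨hua.trans hub.symm, (Wa.reverse.append q).append Wb, fun t ht => ?_⟩
    simp only [Walk.mem_support_append_iff, Walk.support_reverse, List.mem_reverse] at ht
    rcases ht with (ht | ht) | ht
    · exact hua ▸ hWa t ht
    · exact hua ▸ hq t ht
    · exact hua ▸ hWb t ht
  have hab_ge := dist_add_dist_le_of_mem_takeUntil_of_mem_dropUntil hp hu ha hb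
  have hab_le := (dist_le_clusterDiam hcluster).trans (clusterDiam_le_maxClusterDiam u)
  rw [dist_comm] at hua
  omega

lemma isSlim_maxClusterDiam_div_two [Fintype V] : IsSlim G (maxClusterDiam G / 2) := by
  intro x y z pxy pxz pyz hxy _ _ u hu
  by_contra! hfar
  have hbound := two_mul_add_two_le_maxClusterDiam hxy hu (maxClusterDiam G / 2)
    (q := pxz.append pyz.reverse) fun v hv => by
      rw [Walk.mem_support_append_iff, Walk.support_reverse, List.mem_reverse] at hv
      exact hfar v hv
  omega

end SimpleGraph

theorem slimness_le_maxClusterDiam_div_two_general {V : Type} [Fintype V]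
    (G : SimpleGraph V) :
    slimness G ≤ maxClusterDiam G / 2 :=
  Nat.sInf_le isSlim_maxClusterDiam_div_two

/-- For every finite connected graph `G`, `sl(G) ≤ ⌊Δ̂(G)/2⌋`. -/
theorem slimness_le_maxClusterDiam_div_two {V : Type} [Fintype V]
    (G : SimpleGraph V) (hG : G.Connected) :
    slimness G ≤ maxClusterDiam G / 2 :=
  slimness_le_maxClusterDiam_div_two_general G
end

section
/- For every finite connected simple graph G, the slimness of G is at most 3·tb(G), where tb(G) is the tree-breadth of G. -/
open SimpleGraph

/-- A tree-decomposition of `G` with index type `ι`: a tree `T` on `ι` and bags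
covering all vertices and edges, such that for any node `j` on the path of `T`
between nodes `i` and `k`, the bag of `j` contains the intersection of the bags
of `i` and `k`. -/
structure TreeDecomp {V : Type} (G : SimpleGraph V) (ι : Type) where
  /-- the decomposition tree -/
  T : SimpleGraph ι
  isTree : T.IsTree
  /-- the bags -/
  bag : ι → Set V
  covers_vertex : ∀ v : V, ∃ i, v ∈ bag i
  covers_edge : ∀ ⦃u v : V⦄, G.Adj u v → ∃ i, u ∈ bag i ∧ v ∈ bag i
  path_inter : ∀ (i j k : ι) (p : T.Walk i k), p.IsPath → j ∈ p.support →
      bag i ∩ bag k ⊆ bag j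

/-- `G` admits a tree-decomposition of breadth at most `r`
(every bag is contained in a ball of radius `r` of `G`). -/
def HasTreeDecompOfBreadth {V : Type} (G : SimpleGraph V) (r : ℕ) : Prop :=
  ∃ (ι : Type) (_ : Fintype ι) (td : TreeDecomp G ι),
    ∀ i, ∃ c : V, ∀ u ∈ td.bag i, G.dist c u ≤ r

/-- The tree-breadth `tb(G)`: the minimum breadth over all tree-decompositions of `G`. -/
noncomputable def treeBreadth {V : Type} (G : SimpleGraph V) : ℕ :=
  sInf {r : ℕ | HasTreeDecompOfBreadth G r}


/-!
Take a tree-decomposition of breadth `r` and bags containing `x`, `y` and a vertex `u` of the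
side `xy`. The median `m` of these three nodes of the decomposition tree lies between any two of
them, and since bags on a tree path separate `G`, the bag of `m` meets the part of the side from
`x` to `u` in some `w`, the part from `u` to `y` in some `w'`, and the path `x → z → y` in some
`v`. All three lie within `r` of one centre, and `u` lies between `w` and `w'` on a geodesic, so
`d(w, u) + d(u, w') = d(w, w') ≤ 2r`: thus `u` is within `r` of `w` or `w'`, hence within `3r`
of `v`.
-/

namespace SimpleGraph

variable {ι : Type} {T : SimpleGraph ι}

def IsBetween (T : SimpleGraph ι) (i k j : ι) : Prop :=
  ∀ p : T.Walk i k, p.IsPath → j ∈ p.support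

theorem IsAcyclic.eq_of_isPath (hT : T.IsAcyclic) {a b : ι} {p q : T.Walk a b}
    (hp : p.IsPath) (hq : q.IsPath) : p = q :=
  congrArg Subtype.val ((hT.subsingleton_path a b).elim ⟨p, hp⟩ ⟨q, hq⟩)

theorem Walk.IsPath.append_of_inter_support {a b c : ι} {p : T.Walk a b} {q : T.Walk b c}
    (hp : p.IsPath) (hq : q.IsPath) (hpq : ∀ k ∈ p.support, k ∈ q.support → k = b) :
    (p.append q).IsPath := by
  rw [Walk.isPath_def, Walk.support_append]
  have hq' := hq.support_nodup
  rw [← q.cons_tail_support, List.nodup_cons] at hq'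
  refine hp.support_nodup.append hq'.2 fun k hk hk' => ?_
  obtain rfl := hpq k hk (List.mem_of_mem_tail hk')
  exact hq'.1 hk'

theorem Walk.exists_append_first_mem (S : Set ι) {a b : ι} (W : T.Walk a b) (hb : b ∈ S) :
    ∃ j ∈ S, ∃ (W₁ : T.Walk a j) (W₂ : T.Walk j b),
      W₁.append W₂ = W ∧ ∀ k ∈ W₁.support, k ∈ S → k = j := by
  induction W with
  | nil => exact ⟨_, hb, nil, nil, rfl, fun k hk _ => by simpa using hk⟩
  | @cons a _ _ h W ih =>
    by_cases ha : a ∈ S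
    · exact ⟨a, ha, nil, cons h W, rfl, fun k hk _ => by simpa using hk⟩
    obtain ⟨j, hj, W₁, W₂, rfl, hfirst⟩ := ih hb
    refine ⟨j, hj, cons h W₁, W₂, rfl, fun k hk hkS => ?_⟩
    rcases (Walk.mem_support_iff _).mp hk with rfl | hk
    · exact absurd hkS ha
    · exact hfirst k hk hkS

/-- The median of `a`, `b`, `c`: the first vertex of the `c`–`a` path on the `a`–`b` path. -/
theorem IsTree.exists_median (hT : T.IsTree) (a b c : ι) :
    ∃ m, T.IsBetween a b m ∧ T.IsBetween c a m ∧ T.IsBetween c b m := by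
  classical
  obtain ⟨p, hp⟩ : ∃ p : T.Walk a b, p.IsPath :=
    ⟨_, (hT.connected.preconnected a b).some.bypass_isPath⟩
  obtain ⟨q, hq⟩ : ∃ q : T.Walk c a, q.IsPath :=
    ⟨_, (hT.connected.preconnected c a).some.bypass_isPath⟩
  obtain ⟨j, hj, W₁, W₂, rfl, hfirst⟩ :=
    q.exists_append_first_mem {k | k ∈ p.support} p.start_mem_support
  have hcb : (W₁.append (p.dropUntil j hj)).IsPath :=
    hq.of_append_left.append_of_inter_support (hp.dropUntil hj) fun k hk hk' =>
      hfirst k hk (p.support_dropUntil_subset_support hj hk')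
  refine ⟨j, fun p' hp' => ?_, fun q' hq' => ?_, fun r hr => ?_⟩
  · rwa [hT.isAcyclic.eq_of_isPath hp' hp]
  · rw [hT.isAcyclic.eq_of_isPath hq' hq, Walk.mem_support_append_iff]
    exact Or.inl W₁.end_mem_support
  · rw [hT.isAcyclic.eq_of_isPath hr hcb, Walk.mem_support_append_iff]
    exact Or.inl W₁.end_mem_support

variable {V : Type} {G : SimpleGraph V}

theorem Walk.dist_add_dist_le_length [DecidableEq V] {x y u : V} (p : G.Walk x y)
    (hu : u ∈ p.support) : G.dist x u + G.dist u y ≤ p.length := by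
  conv_rhs => rw [← p.take_spec hu, Walk.length_append]
  exact add_le_add (dist_le _) (dist_le _)

theorem Connected.dist_add_dist_le_of_isGeodesic [DecidableEq V] (hG : G.Connected)
    {x y u w w' : V} (q : G.Walk x y) (hq : IsGeodesic G q) (hu : u ∈ q.support)
    (hw : w ∈ (q.takeUntil u hu).support) (hw' : w' ∈ (q.dropUntil u hu).support) :
    G.dist w u + G.dist u w' ≤ G.dist w w' := by
  have hsplit := congrArg Walk.length (q.take_spec hu)
  rw [Walk.length_append] at hsplit
  have hxu := (q.takeUntil u hu).dist_add_dist_le_length hw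
  have huy := (q.dropUntil u hu).dist_add_dist_le_length hw'
  have hxy : G.dist x y ≤ G.dist x w + (G.dist w w' + G.dist w' y) :=
    hG.dist_triangle.trans (add_le_add_right hG.dist_triangle _)
  unfold IsGeodesic at hq
  omega

theorem Connected.dist_le_three_mul (hG : G.Connected) {r : ℕ} {c u v w w' : V}
    (hw : G.dist c w ≤ r) (hw' : G.dist c w' ≤ r) (hv : G.dist c v ≤ r)
    (hu : G.dist w u + G.dist u w' ≤ G.dist w w') : G.dist u v ≤ 3 * r := by
  have hww' : G.dist w w' ≤ G.dist w c + G.dist c w' := hG.dist_triangle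
  have hwv : G.dist w v ≤ G.dist w c + G.dist c v := hG.dist_triangle
  have hw'v : G.dist w' v ≤ G.dist w' c + G.dist c v := hG.dist_triangle
  have huv₁ : G.dist u v ≤ G.dist u w + G.dist w v := hG.dist_triangle
  have huv₂ : G.dist u v ≤ G.dist u w' + G.dist w' v := hG.dist_triangle
  rw [dist_comm (u := w) (v := c)] at hww' hwv
  rw [dist_comm (u := w') (v := c)] at hw'v
  rw [dist_comm (u := u) (v := w)] at huv₁
  omega

end SimpleGraph

namespace TreeDecomp

variable {V ι : Type} {G : SimpleGraph V} (td : TreeDecomp G ι)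

theorem exists_walk_not_mem_support_of_mem_bag {a : V} {i j k : ι} (hj : a ∉ td.bag j)
    (hi : a ∈ td.bag i) (hk : a ∈ td.bag k) : ∃ t : td.T.Walk i k, j ∉ t.support := by
  classical
  let t := (td.isTree.connected.preconnected i k).some.bypass
  exact ⟨t, fun hjt => hj (td.path_inter i j k t (Walk.bypass_isPath _) hjt ⟨hi, hk⟩)⟩

theorem exists_walk_not_mem_support {j : ι} {a b : V} (p : G.Walk a b)
    (hp : ∀ v ∈ p.support, v ∉ td.bag j) {i k : ι} (ha : a ∈ td.bag i)
    (hb : b ∈ td.bag k) : ∃ t : td.T.Walk i k, j ∉ t.support := by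
  induction p generalizing i with
  | nil => exact td.exists_walk_not_mem_support_of_mem_bag (hp _ (List.mem_singleton_self _)) ha hb
  | cons h p ih =>
    obtain ⟨l, hal, hcl⟩ := td.covers_edge h
    obtain ⟨t₁, ht₁⟩ := td.exists_walk_not_mem_support_of_mem_bag
      (hp _ (Walk.start_mem_support _)) ha hal
    obtain ⟨t₂, ht₂⟩ := ih (fun v hv => hp v (List.mem_cons_of_mem _ hv)) hcl hb
    exact ⟨t₁.append t₂, by simp [Walk.mem_support_append_iff, ht₁, ht₂]⟩

theorem exists_mem_support_mem_bag {i j k : ι} (hj : td.T.IsBetween i k j) {a b : V}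
    (ha : a ∈ td.bag i) (hb : b ∈ td.bag k) (p : G.Walk a b) :
    ∃ v ∈ p.support, v ∈ td.bag j := by
  classical
  by_contra! hp
  obtain ⟨t, ht⟩ := td.exists_walk_not_mem_support p hp ha hb
  exact ht (t.support_bypass_subset_support (hj _ t.bypass_isPath))

end TreeDecomp

theorem isSlim_three_mul_of_hasTreeDecompOfBreadth {V : Type} {G : SimpleGraph V}
    (hG : G.Connected) {r : ℕ} (h : HasTreeDecompOfBreadth G r) : IsSlim G (3 * r) := by
  classical
  obtain ⟨ι, -, td, hbreadth⟩ := h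
  intro x y z pxy pxz pyz hxy _ _ u hu
  obtain ⟨ix, hix⟩ := td.covers_vertex x
  obtain ⟨iy, hiy⟩ := td.covers_vertex y
  obtain ⟨iu, hiu⟩ := td.covers_vertex u
  obtain ⟨m, hxy_m, hux_m, huy_m⟩ := td.isTree.exists_median ix iy iu
  obtain ⟨w, hw, hwm⟩ :=
    td.exists_mem_support_mem_bag hux_m hiu hix (pxy.takeUntil u hu).reverse
  obtain ⟨w', hw', hw'm⟩ := td.exists_mem_support_mem_bag huy_m hiu hiy (pxy.dropUntil u hu)
  obtain ⟨v, hv, hvm⟩ := td.exists_mem_support_mem_bag hxy_m hix hiy (pxz.append pyz.reverse)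
  obtain ⟨c, hc⟩ := hbreadth m
  rw [Walk.support_reverse, List.mem_reverse] at hw
  rw [Walk.mem_support_append_iff, Walk.support_reverse, List.mem_reverse] at hv
  exact ⟨v, hv, hG.dist_le_three_mul (hc w hwm) (hc w' hw'm) (hc v hvm)
    (hG.dist_add_dist_le_of_isGeodesic pxy hxy hu hw hw')⟩

theorem hasTreeDecompOfBreadth_diam {V : Type} [Finite V] {G : SimpleGraph V}
    (hG : G.Connected) : HasTreeDecompOfBreadth G G.diam := by
  have : Nonempty V := hG.nonempty
  refine ⟨Unit, inferInstance,
    { T := ⊥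
      isTree := .of_subsingleton
      bag := fun _ => Set.univ
      covers_vertex := fun _ => ⟨(), trivial⟩
      covers_edge := fun _ _ _ => ⟨(), trivial, trivial⟩
      path_inter := fun _ _ _ _ _ _ => Set.subset_univ _ },
    fun _ => ⟨Classical.arbitrary V, fun _ _ =>
      dist_le_diam (connected_iff_ediam_ne_top.mp hG)⟩⟩

/-- For every finite connected graph `G`, `sl(G) ≤ 3 ⬝ tb(G)`. -/
theorem slimness_le_three_mul_treeBreadth {V : Type} [Fintype V]
    (G : SimpleGraph V) (hG : G.Connected) :
    slimness G ≤ 3 * treeBreadth G :=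
  have hbreadth : HasTreeDecompOfBreadth G (treeBreadth G) :=
    Nat.sInf_mem (s := {r | HasTreeDecompOfBreadth G r}) ⟨_, hasTreeDecompOfBreadth_diam hG⟩
  Nat.sInf_le (isSlim_three_mul_of_hasTreeDecompOfBreadth hG hbreadth)
end
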